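/- Let K be a complex Hilbert space and let A, B be bounded doubly infinite Toeplitz operators on ℓ²(ℤ,K) (i.e. S̃*AS̃ = A and S̃*BS̃ = B for the bilateral shift S̃), with A selfadjoint, and suppose 𝓜(A,B) is nonempty. Then 𝓜(A,B) has a greatest element M₊ and a least element M₋, both of which are doubly infinite Toeplitz operators, and the subset 𝓜_T(A,B) of doubly infinite Toeplitz elements of 𝓜(A,B) is norm closed and convex and contains M₊ and M₋ as its greatest and least elements. -/

import Mathlib

set_option maxHeartbeats 1000000
set_option synthInstance.maxHeartbeats 400000

open ContinuousLinearMap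
open scoped ComplexOrder ComplexConjugate ENNReal

noncomputable section

variable {E : Type*} [NormedAddCommGroup E] [InnerProductSpace ℂ E] [CompleteSpace E]

/-- Positivity of the 2×2 block operator `[[A-M, B*],[B, M]]`:
`⟨(A-M)x,x⟩ + 2 Re⟨Bx,y⟩ + ⟨My,y⟩ ≥ 0` for all `x, y`. -/
def BlockPos (A B M : E →L[ℂ] E) : Prop :=
  ∀ x y : E,
    0 ≤ (inner ℂ ((A - M) x) x : ℂ) + ((2 * (inner ℂ (B x) y : ℂ).re : ℝ) : ℂ) + (inner ℂ (M y) y : ℂ)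

/-- The set `𝓜(A,B)` of bounded operators `M` with `[[A-M, B*],[B, M]] ≥ 0`. -/
def MSet (A B : E →L[ℂ] E) : Set (E →L[ℂ] E) := {M | BlockPos A B M}


/-- A bounded quadratic form (parallelogram law + complex homogeneity) is represented by a
selfadjoint bounded operator. -/
theorem exists_selfadjoint_of_quadratic (q : E → ℝ) (C : ℝ)
    (hb : ∀ x, |q x| ≤ C * ‖x‖ ^ 2)
    (hpar : ∀ x y, q (x + y) + q (x - y) = 2 * q x + 2 * q y)
    (hhom : ∀ (c : ℂ) (x : E), q (c • x) = ‖c‖ ^ 2 * q x) :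
    ∃ T : E →L[ℂ] E, IsSelfAdjoint T ∧ ∀ x, (inner ℂ (T x) x : ℂ) = (q x : ℂ) := by
  -- WLOG nonnegative constant
  set C' : ℝ := max C 0 with hC'
  have hC0 : 0 ≤ C' := le_max_right _ _
  have hb' : ∀ x, |q x| ≤ C' * ‖x‖ ^ 2 := fun x =>
    (hb x).trans (mul_le_mul_of_nonneg_right (le_max_left _ _) (by positivity))
  have hq0 : q 0 = 0 := by
    have := hhom 0 0; simpa using this
  have hqneg : ∀ x, q (-x) = q x := by
    intro x
    have := hhom (-1) x; simpa using this
  -- the real polarization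
  set r : E → E → ℝ := fun x y => (q (x + y) - q (x - y)) / 4 with hr
  have hrsymm : ∀ x y, r x y = r y x := by
    intro x y
    simp only [hr]
    rw [add_comm, show x - y = -(y - x) by abel, hqneg]
  have hr0 : ∀ x, r x 0 = 0 := by intro x; simp [hr]
  have hr0' : ∀ y, r 0 y = 0 := by
    intro y; rw [hrsymm]; exact hr0 y
  -- the parallelogram identity for r
  have hkey : ∀ x y z, r x (y + z) + r x (y - z) = 2 * r x y := by
    intro x y z
    have h1 := hpar (x + y) z
    have h2 := hpar (x - y) z
    simp only [hr]
    rw [show x + (y + z) = x + y + z by abel, show x - (y + z) = x - y - z by abel,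
      show x + (y - z) = x + y - z by abel, show x - (y - z) = x - y + z by abel]
    linarith
  have hdouble : ∀ x y, r x (y + y) = 2 * r x y := by
    intro x y
    have := hkey x y y
    simpa [hr0] using this
  have hradd : ∀ x a b, r x (a + b) = r x a + r x b := by
    intro x a b
    have h1 := hkey x ((2⁻¹ : ℝ) • (a + b)) ((2⁻¹ : ℝ) • (a - b))
    have e1 : (2⁻¹ : ℝ) • (a + b) + (2⁻¹ : ℝ) • (a - b) = a := by
      rw [← smul_add]; rw [show a + b + (a - b) = a + a by abel]
      rw [smul_add]; rw [show (2⁻¹:ℝ) • a + (2⁻¹:ℝ) • a = ((2⁻¹:ℝ)+(2⁻¹:ℝ)) • a by rw [add_smul]]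
      norm_num
    have e2 : (2⁻¹ : ℝ) • (a + b) - (2⁻¹ : ℝ) • (a - b) = b := by
      rw [← smul_sub, show a + b - (a - b) = b + b by abel, smul_add,
        show (2⁻¹:ℝ) • b + (2⁻¹:ℝ) • b = ((2⁻¹:ℝ)+(2⁻¹:ℝ)) • b by rw [add_smul]]
      norm_num
    have h2 := hdouble x ((2⁻¹ : ℝ) • (a + b))
    have e3 : (2⁻¹ : ℝ) • (a + b) + (2⁻¹ : ℝ) • (a + b) = a + b := by
      rw [show (2⁻¹:ℝ) • (a+b) + (2⁻¹:ℝ) • (a+b) = ((2⁻¹:ℝ)+(2⁻¹:ℝ)) • (a+b) by rw [add_smul]]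
      norm_num
    rw [e1, e2] at h1
    rw [e3] at h2
    linarith
  -- crude bound for r
  have hrbound0 : ∀ x y, |r x y| ≤ C' / 2 * (‖x‖ ^ 2 + ‖y‖ ^ 2) := by
    intro x y
    have h1 := hb' (x + y)
    have h2 := hb' (x - y)
    have h3 := parallelogram_law_with_norm ℂ x y
    have e1 : ‖x + y‖ ^ 2 = ‖x + y‖ * ‖x + y‖ := sq ‖x + y‖
    have e2 : ‖x - y‖ ^ 2 = ‖x - y‖ * ‖x - y‖ := sq ‖x - y‖
    have e3 : ‖x‖ ^ 2 = ‖x‖ * ‖x‖ := sq ‖x‖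
    have e4 : ‖y‖ ^ 2 = ‖y‖ * ‖y‖ := sq ‖y‖
    rw [abs_le] at h1 h2 ⊢
    constructor <;> simp only [hr] <;> nlinarith [h1.1, h1.2, h2.1, h2.2]
  -- integer and real homogeneity in the second slot
  have hrzsmul : ∀ (x : E) (m : ℤ) (z : E), r x (m • z) = m * r x z := by
    intro x m z
    let G : E →+ ℝ := AddMonoidHom.mk' (fun z => r x z) (hradd x)
    have := map_zsmul G m z
    simpa [G] using this
  have hrreal : ∀ (t : ℝ) (x y : E), r x (t • y) = t * r x y := by
    intro t x y
    set D : ℝ := C' / 2 * (‖x‖ ^ 2 + ‖y‖ ^ 2) + |r x y| with hD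
    have key : ∀ n : ℕ, 0 < n → |r x (t • y) - t * r x y| ≤ D / n := by
      intro n hn
      set m : ℤ := ⌊(n : ℝ) * t⌋ with hm
      set δ : ℝ := Int.fract ((n : ℝ) * t) with hδ
      have hδ0 : 0 ≤ δ := Int.fract_nonneg _
      have hδ1 : δ < 1 := Int.fract_lt_one _
      have hsplit : (n : ℝ) * t = (m : ℝ) + δ := by
        rw [hδ, hm, Int.fract]; ring
      -- n • (t • y) = (m : ℝ) • y + δ • y
      have e1 : r x (((n : ℝ) * t) • y) = n * r x (t • y) := by
        have : ((n : ℝ) * t) • y = (n : ℤ) • (t • y) := by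
          rw [mul_smul, show ((n : ℕ) : ℝ) = ((n : ℤ) : ℝ) by push_cast; ring,
            Int.cast_smul_eq_zsmul]
        rw [this, hrzsmul]
        push_cast
        ring
      have e2 : r x (((n : ℝ) * t) • y) = m * r x y + r x (δ • y) := by
        rw [hsplit, add_smul, hradd]
        congr 1
        have : ((m : ℝ)) • y = m • y := by
          rw [Int.cast_smul_eq_zsmul]
        rw [this, hrzsmul]
      have e3 : |r x (δ • y)| ≤ C' / 2 * (‖x‖ ^ 2 + ‖y‖ ^ 2) := by
        refine (hrbound0 x (δ • y)).trans ?_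
        have : ‖δ • y‖ ≤ ‖y‖ := by
          rw [norm_smul]
          simp only [Real.norm_eq_abs]
          calc |δ| * ‖y‖ ≤ 1 * ‖y‖ := by
                apply mul_le_mul_of_nonneg_right _ (norm_nonneg _)
                rw [abs_of_nonneg hδ0]; exact le_of_lt hδ1
            _ = ‖y‖ := one_mul _
        have h2 : ‖δ • y‖ ^ 2 ≤ ‖y‖ ^ 2 := by
          apply pow_le_pow_left₀ (norm_nonneg _) this
        nlinarith [hC0, norm_nonneg x]
      have e4 : |(m : ℝ) - (n : ℝ) * t| ≤ 1 := by
        rw [hsplit]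
        rw [abs_sub_comm]
        simp only [add_sub_cancel_left]
        rw [abs_of_nonneg hδ0]; exact le_of_lt hδ1
      -- combine
      have hn' : (0 : ℝ) < n := by exact_mod_cast hn
      rw [le_div_iff₀ hn']
      have habs : |r x (t • y) - t * r x y| * n
          = |(n : ℝ) * (r x (t • y) - t * r x y)| := by
        rw [abs_mul, abs_of_pos hn', mul_comm]
      rw [habs]
      have : (n : ℝ) * (r x (t • y) - t * r x y)
          = ((m : ℝ) - (n : ℝ) * t) * r x y + r x (δ • y) := by
        have := e1.symm.trans e2
        nlinarith [this]
      rw [this]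
      calc |((m : ℝ) - (n : ℝ) * t) * r x y + r x (δ • y)|
          ≤ |((m : ℝ) - (n : ℝ) * t) * r x y| + |r x (δ • y)| := abs_add_le _ _
        _ ≤ |r x y| + (C' / 2 * (‖x‖ ^ 2 + ‖y‖ ^ 2)) := by
            apply add_le_add _ e3
            rw [abs_mul]
            calc |(m : ℝ) - (n : ℝ) * t| * |r x y| ≤ 1 * |r x y| :=
                  mul_le_mul_of_nonneg_right e4 (abs_nonneg _)
              _ = |r x y| := one_mul _
        _ = D := by rw [hD]; ring
    have habs : |r x (t • y) - t * r x y| ≤ 0 := by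
      refine le_of_forall_pos_le_add ?_
      intro ε hε
      obtain ⟨n, hn⟩ := exists_nat_gt (D / ε)
      have hD0 : 0 ≤ D := by
        have h1 := hrbound0 x y
        have h2 := abs_nonneg (r x y)
        rw [hD]
        positivity
      have hn0 : 0 < n := by
        by_contra h
        push_neg at h
        interval_cases n
        simp at hn
        have : 0 ≤ D / ε := div_nonneg hD0 (le_of_lt hε)
        linarith
      refine (key n hn0).trans ?_
      have hn' : (0 : ℝ) < n := by exact_mod_cast hn0
      rw [zero_add, div_le_iff₀ hn']
      rw [div_lt_iff₀ hε] at hn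
      nlinarith
    have := abs_nonneg (r x (t • y) - t * r x y)
    have : |r x (t • y) - t * r x y| = 0 := le_antisymm habs this
    rw [abs_eq_zero, sub_eq_zero] at this
    exact this
  -- real homogeneity in the first slot
  have hrreal' : ∀ (t : ℝ) (x y : E), r (t • x) y = t * r x y := by
    intro t x y
    rw [hrsymm, hrreal, hrsymm]
  -- product bound
  have hrboundmul : ∀ x y, |r x y| ≤ C' * ‖x‖ * ‖y‖ := by
    intro x y
    rcases eq_or_ne x 0 with hx | hx
    · simp [hx, hr0']
    rcases eq_or_ne y 0 with hy | hy
    · simp [hy, hr0]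
    have hxn : (0 : ℝ) < ‖x‖ := norm_pos_iff.mpr hx
    have hyn : (0 : ℝ) < ‖y‖ := norm_pos_iff.mpr hy
    set t : ℝ := Real.sqrt (‖y‖ / ‖x‖) with ht
    have ht0 : 0 < t := Real.sqrt_pos.mpr (div_pos hyn hxn)
    have ht2 : t ^ 2 = ‖y‖ / ‖x‖ := Real.sq_sqrt (le_of_lt (div_pos hyn hxn))
    have hre : r x y = r (t • x) (t⁻¹ • y) := by
      rw [hrreal', hrreal]
      field_simp
    rw [hre]
    refine (hrbound0 _ _).trans ?_
    have e1 : ‖t • x‖ ^ 2 = t ^ 2 * ‖x‖ ^ 2 := by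
      rw [norm_smul, mul_pow, Real.norm_eq_abs, sq_abs]
    have e2 : ‖t⁻¹ • y‖ ^ 2 = (t ^ 2)⁻¹ * ‖y‖ ^ 2 := by
      rw [norm_smul, mul_pow, Real.norm_eq_abs, sq_abs, inv_pow]
    rw [e1, e2, ht2]
    have g1 : ‖y‖ / ‖x‖ * ‖x‖ ^ 2 = ‖y‖ * ‖x‖ := by
      field_simp
    have g2 : (‖y‖ / ‖x‖)⁻¹ * ‖y‖ ^ 2 = ‖x‖ * ‖y‖ := by
      rw [inv_div]
      field_simp
    rw [g1, g2]
    exact le_of_eq (by ring)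
  -- I-rotation invariance
  have hhomI : ∀ z : E, q (Complex.I • z) = q z := by
    intro z
    rw [hhom]
    simp
  have hrI : ∀ x y, r (Complex.I • x) (Complex.I • y) = r x y := by
    intro x y
    simp only [hr]
    rw [← smul_add, ← smul_sub, hhomI, hhomI]
  have hrneg : ∀ x y, r (-x) y = -r x y := by
    intro x y
    have := hrreal' (-1) x y
    simpa using this
  have hrIskew : ∀ x y, r (Complex.I • x) y = -(r x (Complex.I • y)) := by
    intro x y
    have h1 : r (Complex.I • x) y
        = r (Complex.I • (Complex.I • x)) (Complex.I • y) := (hrI _ _).symm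
    have h2 : Complex.I • (Complex.I • x) = -x := by
      rw [smul_smul, Complex.I_mul_I]
      simp
    rw [h1, h2, hrneg]
  have hrxx : ∀ x, r x x = q x := by
    intro x
    simp only [hr]
    rw [show x - x = 0 by abel, hq0]
    have : x + x = (2 : ℂ) • x := (two_smul ℂ x).symm
    rw [this, hhom]
    norm_num
  have hrxIx : ∀ x, r x (Complex.I • x) = 0 := by
    intro x
    simp only [hr]
    have e1 : x + Complex.I • x = ((1 + Complex.I) : ℂ) • x := by
      rw [add_smul, one_smul]
    have e2 : x - Complex.I • x = ((1 - Complex.I) : ℂ) • x := by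
      rw [sub_smul, one_smul]
    rw [e1, e2, hhom, hhom]
    have n1 : ‖(1 + Complex.I : ℂ)‖ ^ 2 = 2 := by
      rw [Complex.sq_norm]
      norm_num [Complex.normSq_apply]
    have n2 : ‖(1 - Complex.I : ℂ)‖ ^ 2 = 2 := by
      rw [Complex.sq_norm]
      norm_num [Complex.normSq_apply]
    rw [n1, n2]
    ring
  -- the sesquilinear form
  set s : E → E → ℂ := fun x y =>
    ((r x y : ℂ) - Complex.I * (r x (Complex.I • y) : ℂ)) with hs
  have hsherm : ∀ x y, s y x = conj (s x y) := by
    intro x y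
    simp only [hs]
    rw [map_sub, map_mul, Complex.conj_I, Complex.conj_ofReal, Complex.conj_ofReal]
    rw [hrsymm y x, show r y (Complex.I • x) = - r x (Complex.I • y) by
      rw [hrsymm, hrIskew]]
    push_cast
    ring
  have hs_add_right : ∀ x a b, s x (a + b) = s x a + s x b := by
    intro x a b
    simp only [hs]
    rw [smul_add, hradd, hradd]
    push_cast
    ring
  have hs_smulI_right : ∀ x y, s x (Complex.I • y) = Complex.I * s x y := by
    intro x y
    simp only [hs]
    have h2 : Complex.I • (Complex.I • y) = -y := by
      rw [smul_smul, Complex.I_mul_I]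
      simp
    rw [h2, show r x (-y) = - r x y by rw [hrsymm, hrneg, hrsymm]]
    push_cast
    ring_nf
    rw [Complex.I_sq]
    ring
  have hs_realsmul_right : ∀ (t : ℝ) x y, s x (t • y) = (t : ℂ) * s x y := by
    intro t x y
    simp only [hs]
    rw [hrreal, show Complex.I • t • y = t • Complex.I • y by rw [smul_comm], hrreal]
    push_cast
    ring
  have hs_smul_right : ∀ (c : ℂ) x y, s x (c • y) = c * s x y := by
    intro c x y
    have hdecomp : c • y = (c.re : ℝ) • y + (c.im : ℝ) • (Complex.I • y) := by
      rw [← Complex.coe_smul, ← Complex.coe_smul, smul_smul, ← add_smul, Complex.re_add_im]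
    rw [hdecomp, hs_add_right, hs_realsmul_right, hs_realsmul_right, hs_smulI_right]
    show (c.re : ℂ) * s x y + (c.im : ℂ) * (Complex.I * s x y) = c * s x y
    conv_rhs => rw [← Complex.re_add_im c]
    ring
  have hs_bound : ∀ x y, ‖s x y‖ ≤ 2 * C' * ‖x‖ * ‖y‖ := by
    intro x y
    simp only [hs]
    refine (norm_sub_le _ _).trans ?_
    rw [norm_mul]
    simp only [Complex.norm_real, Complex.norm_I, one_mul]
    have b1 := hrboundmul x y
    have b2 := hrboundmul x (Complex.I • y)
    rw [norm_smul] at b2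
    simp only [Complex.norm_I, one_mul] at b2
    rw [Real.norm_eq_abs, Real.norm_eq_abs]
    nlinarith [abs_nonneg (r x y), abs_nonneg (r x (Complex.I • y))]
  -- first-slot properties via hermitian symmetry
  have hs_add_left : ∀ a b x, s (a + b) x = s a x + s b x := by
    intro a b x
    rw [hsherm x (a + b), hs_add_right, map_add, ← hsherm x a, ← hsherm x b]
  have hs_smul_left : ∀ (c : ℂ) a x, s (c • a) x = conj c * s a x := by
    intro c a x
    rw [hsherm x (c • a), hs_smul_right, map_mul, ← hsherm x a]
  have hsxx : ∀ x, s x x = (q x : ℂ) := by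
    intro x
    simp only [hs]
    rw [hrxx, hrxIx]
    push_cast
    ring
  -- the linear functional x ↦ s y x
  let φ : E → (E →L[ℂ] ℂ) := fun y =>
    LinearMap.mkContinuous
      { toFun := fun x => s y x
        map_add' := fun a b => hs_add_right y a b
        map_smul' := fun c a => by simp [hs_smul_right] }
      (2 * C' * ‖y‖) (fun x => by
        simpa [mul_assoc] using hs_bound y x)
  have hφ : ∀ y x, φ y x = s y x := fun y x => rfl
  set T : E → E := fun y => (InnerProductSpace.toDual ℂ E).symm (φ y) with hTdef
  have hT : ∀ y x, (inner ℂ (T y) x : ℂ) = s y x := fun y x =>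
    InnerProductSpace.toDual_symm_apply
  have hTadd : ∀ y₁ y₂, T (y₁ + y₂) = T y₁ + T y₂ := by
    intro y₁ y₂
    apply ext_inner_right ℂ
    intro v
    rw [hT, inner_add_left, hT, hT, hs_add_left]
  have hTsmul : ∀ (c : ℂ) (y : E), T (c • y) = c • T y := by
    intro c y
    apply ext_inner_right ℂ
    intro v
    rw [hT, inner_smul_left, hT, hs_smul_left]
  have hTbound : ∀ y, ‖T y‖ ≤ 2 * C' * ‖y‖ := by
    intro y
    rw [hTdef]
    simp only
    rw [LinearIsometryEquiv.norm_map]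
    exact LinearMap.mkContinuous_norm_le _ (by positivity) _
  let Tc : E →L[ℂ] E :=
    LinearMap.mkContinuous
      { toFun := T
        map_add' := hTadd
        map_smul' := fun c y => by simp [hTsmul] }
      (2 * C') (fun y => by simpa [mul_assoc] using hTbound y)
  have hTcapp : ∀ y, Tc y = T y := fun y => rfl
  have hTq : ∀ x, (inner ℂ (Tc x) x : ℂ) = (q x : ℂ) := by
    intro x
    rw [hTcapp, hT, hsxx]
  refine ⟨Tc, ?_, hTq⟩
  rw [ContinuousLinearMap.isSelfAdjoint_iff']
  have hzero : ∀ x : E, (inner ℂ ((adjoint Tc - Tc) x) x : ℂ) = 0 := by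
    intro x
    rw [ContinuousLinearMap.sub_apply, inner_sub_left, adjoint_inner_left]
    have h1 : (inner ℂ x (Tc x) : ℂ) = conj (inner ℂ (Tc x) x : ℂ) :=
      (inner_conj_symm _ _).symm
    rw [h1, hTq, Complex.conj_ofReal, sub_self]
  have h0 : ((adjoint Tc - Tc : E →L[ℂ] E) : E →ₗ[ℂ] E) = 0 :=
    (inner_map_self_eq_zero _).mp hzero
  have h1 : (adjoint Tc - Tc : E →L[ℂ] E) = 0 := by
    apply ContinuousLinearMap.coe_injective
    rw [h0]
    rfl
  exact sub_eq_zero.mp h1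


lemma sa_inner_real {T : E →L[ℂ] E} (hT : IsSelfAdjoint T) (x : E) :
    (inner ℂ (T x) x : ℂ) = (((inner ℂ (T x) x : ℂ).re : ℝ) : ℂ) := by
  have hadj : adjoint T = T := ContinuousLinearMap.isSelfAdjoint_iff'.mp hT
  have h1 : conj (inner ℂ (T x) x : ℂ) = (inner ℂ (T x) x : ℂ) := by
    rw [inner_conj_symm, ← adjoint_inner_left, hadj]
  exact (Complex.conj_eq_iff_re.mp h1).symm

lemma blockPos_re {A B M : E →L[ℂ] E} (h : BlockPos A B M) (x y : E) :
    0 ≤ ((inner ℂ (A x) x : ℂ).re - (inner ℂ (M x) x : ℂ).re) + 2 * (inner ℂ (B x) y : ℂ).re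
      + (inner ℂ (M y) y : ℂ).re := by
  have h0 := h x y
  rw [Complex.le_def] at h0
  have h1 := h0.1
  simp only [ContinuousLinearMap.sub_apply, inner_sub_left, Complex.add_re, Complex.sub_re,
    Complex.ofReal_re, Complex.zero_re] at h1
  linarith

lemma blockPos_M_nonneg {A B M : E →L[ℂ] E} (h : BlockPos A B M) (y : E) :
    0 ≤ (inner ℂ (M y) y : ℂ).re := by
  simpa using blockPos_re h 0 y

lemma blockPos_M_le_A {A B M : E →L[ℂ] E} (h : BlockPos A B M) (x : E) :
    (inner ℂ (M x) x : ℂ).re ≤ (inner ℂ (A x) x : ℂ).re := by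
  have := blockPos_re h x 0
  simp only [inner_zero_right, Complex.zero_re, mul_zero, add_zero, inner_zero_left] at this
  linarith

lemma blockPos_M_im {A B M : E →L[ℂ] E} (h : BlockPos A B M) (y : E) :
    (inner ℂ (M y) y : ℂ).im = 0 := by
  have h0 := h 0 y
  rw [Complex.le_def] at h0
  have h1 := h0.2
  simpa using h1.symm

lemma blockPos_selfAdjoint {A B M : E →L[ℂ] E} (h : BlockPos A B M) :
    IsSelfAdjoint M := by
  rw [ContinuousLinearMap.isSelfAdjoint_iff']
  have hzero : ∀ y : E, (inner ℂ ((adjoint M - M) y) y : ℂ) = 0 := by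
    intro y
    rw [ContinuousLinearMap.sub_apply, inner_sub_left, adjoint_inner_left]
    have h1 : (inner ℂ y (M y) : ℂ) = conj (inner ℂ (M y) y : ℂ) := (inner_conj_symm _ _).symm
    rw [h1]
    have h2 : conj (inner ℂ (M y) y : ℂ) = (inner ℂ (M y) y : ℂ) := by
      rw [Complex.conj_eq_iff_im]
      exact blockPos_M_im h y
    rw [h2, sub_self]
  have h0 : ((adjoint M - M : E →L[ℂ] E) : E →ₗ[ℂ] E) = 0 :=
    (inner_map_self_eq_zero _).mp hzero
  have h1 : (adjoint M - M : E →L[ℂ] E) = 0 := by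
    apply ContinuousLinearMap.coe_injective
    rw [h0]; rfl
  exact sub_eq_zero.mp h1

lemma qf_par (T : E →L[ℂ] E) (x y : E) :
    (inner ℂ (T (x + y)) (x + y) : ℂ).re + (inner ℂ (T (x - y)) (x - y) : ℂ).re
      = 2 * (inner ℂ (T x) x : ℂ).re + 2 * (inner ℂ (T y) y : ℂ).re := by
  simp only [map_add, map_sub, inner_add_left, inner_add_right, inner_sub_left,
    inner_sub_right, Complex.add_re, Complex.sub_re]
  ring

lemma conj_mul_self (c : ℂ) : conj c * c = ((‖c‖ ^ 2 : ℝ) : ℂ) := by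
  rw [mul_comm, Complex.mul_conj, Complex.normSq_eq_norm_sq]

lemma qf_smul (T : E →L[ℂ] E) (c : ℂ) (x : E) :
    (inner ℂ (T (c • x)) (c • x) : ℂ).re = ‖c‖ ^ 2 * (inner ℂ (T x) x : ℂ).re := by
  rw [map_smul, inner_smul_left, inner_smul_right, ← mul_assoc, conj_mul_self]
  simp only [← Complex.ofReal_pow, Complex.mul_re, Complex.ofReal_re, Complex.ofReal_im]
  ring

def qF (T : E →L[ℂ] E) (x : E) : ℝ := (inner ℂ (T x) x : ℂ).re

def bF (B : E →L[ℂ] E) (x y : E) : ℝ := (inner ℂ (B x) y : ℂ).re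

lemma qF_par (T : E →L[ℂ] E) (x y : E) :
    qF T (x + y) + qF T (x - y) = 2 * qF T x + 2 * qF T y := qf_par T x y

lemma qF_hom (T : E →L[ℂ] E) (c : ℂ) (x : E) : qF T (c • x) = ‖c‖ ^ 2 * qF T x :=
  qf_smul T c x

lemma ofReal_mul_re (t : ℝ) (z : ℂ) : (((t : ℝ) : ℂ) * z).re = t * z.re := by
  simp [Complex.mul_re]

lemma half_conj : (starRingEnd ℂ) (2⁻¹ : ℂ) = (2⁻¹ : ℂ) := by
  rw [show (2⁻¹ : ℂ) = (((2⁻¹ : ℝ) : ℂ)) by norm_num, Complex.conj_ofReal]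

lemma half_re (z : ℂ) : ((2⁻¹ : ℂ) * z).re = 2⁻¹ * z.re := by
  rw [show (2⁻¹ : ℂ) = (((2⁻¹ : ℝ) : ℂ)) by norm_num, ofReal_mul_re]

lemma bF_combine (B : E →L[ℂ] E) (x x' y₁ y₂ : E) :
    bF B x (y₁ + y₂) + bF B x' (y₁ - y₂)
      = 2 * bF B ((2⁻¹ : ℂ) • (x + x')) y₁ + 2 * bF B ((2⁻¹ : ℂ) • (x - x')) y₂ := by
  simp only [bF, map_smul, map_add, map_sub, inner_smul_left, inner_add_left,
    inner_add_right, inner_sub_left, inner_sub_right, half_conj, half_re,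
    Complex.add_re, Complex.sub_re]
  ring

lemma bF_smul_both (B : E →L[ℂ] E) (c : ℂ) (x y : E) :
    bF B (c • x) (c • y) = ‖c‖ ^ 2 * bF B x y := by
  show (inner ℂ (B (c • x)) (c • y) : ℂ).re = _
  rw [map_smul, inner_smul_left, inner_smul_right, ← mul_assoc, conj_mul_self]
  simp only [← Complex.ofReal_pow, Complex.mul_re, Complex.ofReal_re, Complex.ofReal_im]
  simp only [bF]
  ring

lemma bF_zero_left (B : E →L[ℂ] E) (y : E) : bF B 0 y = 0 := by
  simp [bF]

lemma bF_zero_right (B : E →L[ℂ] E) (x : E) : bF B x 0 = 0 := by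
  simp [bF]

lemma par_half (p : E → ℝ)
    (hpar : ∀ x y, p (x + y) + p (x - y) = 2 * p x + 2 * p y)
    (x x' : E) :
    p x + p x' = 2 * p ((2⁻¹ : ℂ) • (x + x')) + 2 * p ((2⁻¹ : ℂ) • (x - x')) := by
  have e1 : (2⁻¹ : ℂ) • (x + x') + (2⁻¹ : ℂ) • (x - x') = x := by
    rw [← smul_add, show x + x' + (x - x') = x + x by abel, ← two_smul ℂ x, smul_smul]
    norm_num
  have e2 : (2⁻¹ : ℂ) • (x + x') - (2⁻¹ : ℂ) • (x - x') = x' := by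
    rw [← smul_sub, show x + x' - (x - x') = x' + x' by abel, ← two_smul ℂ x', smul_smul]
    norm_num
  have h := hpar ((2⁻¹ : ℂ) • (x + x')) ((2⁻¹ : ℂ) • (x - x'))
  rw [e1, e2] at h
  linarith

/-- Existence of the least element of `𝓜(A,B)`, which is moreover Toeplitz w.r.t. any
surjective `S` making `A`, `B` Toeplitz. -/
theorem exists_least_blockPos (S A B : E →L[ℂ] E) (hSsurj : Function.Surjective S)
    (hA : adjoint S ∘L A ∘L S = A) (hB : adjoint S ∘L B ∘L S = B)
    (hAsa : IsSelfAdjoint A) (M₀ : E →L[ℂ] E) (hM₀ : BlockPos A B M₀) :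
    ∃ Mm : E →L[ℂ] E, BlockPos A B Mm ∧ (adjoint S ∘L Mm ∘L S = Mm) ∧
      ∀ M, BlockPos A B M → ∀ x, (inner ℂ (Mm x) x : ℂ).re ≤ (inner ℂ (M x) x : ℂ).re := by
  haveI : Nonempty E := ⟨0⟩
  -- basic facts about M₀
  have hm₀0 : ∀ y, 0 ≤ qF M₀ y := blockPos_M_nonneg hM₀
  have hm₀A : ∀ x, qF M₀ x ≤ qF A x := blockPos_M_le_A hM₀
  have hkey0 : ∀ x y, 0 ≤ (qF A x - qF M₀ x) + 2 * bF B x y + qF M₀ y := blockPos_re hM₀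
  -- Toeplitz invariance of the data
  have hTgen : ∀ (T : E →L[ℂ] E), (adjoint S ∘L T ∘L S = T) → ∀ x, qF T (S x) = qF T x := by
    intro T hT x
    show (inner ℂ (T (S x)) (S x) : ℂ).re = (inner ℂ (T x) x : ℂ).re
    rw [← adjoint_inner_left, show adjoint S (T (S x)) = T x by
      rw [show adjoint S (T (S x)) = (adjoint S ∘L T ∘L S) x from rfl, hT]]
  have haS : ∀ x, qF A (S x) = qF A x := hTgen A hA
  have hbS : ∀ x y, bF B (S x) (S y) = bF B x y := by
    intro x y
    show (inner ℂ (B (S x)) (S y) : ℂ).re = (inner ℂ (B x) y : ℂ).re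
    rw [← adjoint_inner_left, show adjoint S (B (S x)) = B x by
      rw [show adjoint S (B (S x)) = (adjoint S ∘L B ∘L S) x from rfl, hB]]
  -- the iteration
  set Φ : (E → ℝ) → (E → ℝ) := fun q y => ⨆ x, (q x - qF A x - 2 * bF B x y) with hΦdef
  set Q : ℕ → E → ℝ := fun k => Φ^[k] (fun _ => 0) with hQdef
  have hQzero : ∀ x, Q 0 x = 0 := fun _ => rfl
  have hQsucc : ∀ k, Q (k + 1) = Φ (Q k) := fun k => Function.iterate_succ_apply' Φ k _
  -- `Good` invariants
  set Good : (E → ℝ) → Prop := fun q =>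
    (∀ x, 0 ≤ q x) ∧ (∀ x, q x ≤ qF M₀ x) ∧
    (∀ x y, q (x + y) + q (x - y) = 2 * q x + 2 * q y) ∧
    (∀ (c : ℂ) (x : E), q (c • x) = ‖c‖ ^ 2 * q x) ∧
    (∀ x, q (S x) = q x) with hGooddef
  have hterm_le : ∀ q : E → ℝ, (∀ x, q x ≤ qF M₀ x) →
      ∀ y x, q x - qF A x - 2 * bF B x y ≤ qF M₀ y := by
    intro q hq y x
    have h1 := hkey0 x y
    have h2 := hq x
    linarith
  have hbdd : ∀ q : E → ℝ, (∀ x, q x ≤ qF M₀ x) →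
      ∀ y, BddAbove (Set.range fun x => q x - qF A x - 2 * bF B x y) := by
    intro q hq y
    refine ⟨qF M₀ y, ?_⟩
    rintro _ ⟨x, rfl⟩
    exact hterm_le q hq y x
  have hΦ_le_m₀ : ∀ q : E → ℝ, (∀ x, q x ≤ qF M₀ x) → ∀ y, Φ q y ≤ qF M₀ y := by
    intro q hq y
    exact ciSup_le (hterm_le q hq y)
  have hΦ_ge : ∀ q : E → ℝ, (∀ x, q x ≤ qF M₀ x) →
      ∀ y x, q x - qF A x - 2 * bF B x y ≤ Φ q y := by
    intro q hq y x
    exact le_ciSup (hbdd q hq y) x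
  have hΦ_mono : ∀ q q' : E → ℝ, (∀ x, q x ≤ q' x) → (∀ x, q' x ≤ qF M₀ x) →
      ∀ y, Φ q y ≤ Φ q' y := by
    intro q q' h hq' y
    apply ciSup_le
    intro x
    refine le_trans ?_ (hΦ_ge q' hq' y x)
    have := h x
    linarith
  -- Good-step: `Φ` preserves the invariants
  have hgood_step : ∀ q : E → ℝ,
      ((∀ x, 0 ≤ q x) ∧ (∀ x, q x ≤ qF M₀ x) ∧
       (∀ x y, q (x + y) + q (x - y) = 2 * q x + 2 * q y) ∧
       (∀ (c : ℂ) (x : E), q (c • x) = ‖c‖ ^ 2 * q x) ∧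
       (∀ x, q (S x) = q x)) →
      ((∀ x, 0 ≤ Φ q x) ∧ (∀ x, Φ q x ≤ qF M₀ x) ∧
       (∀ x y, Φ q (x + y) + Φ q (x - y) = 2 * Φ q x + 2 * Φ q y) ∧
       (∀ (c : ℂ) (x : E), Φ q (c • x) = ‖c‖ ^ 2 * Φ q x) ∧
       (∀ x, Φ q (S x) = Φ q x)) := by
    intro q hq
    obtain ⟨h0, hle, hqpar, hqhom, hqS⟩ := hq
    have hq00 : q 0 = 0 := by
      have := hqhom 0 0
      simpa using this
    have hqFA0 : qF A 0 = 0 := by simp [qF]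
    have hpos : ∀ y, 0 ≤ Φ q y := by
      intro y
      have h1 := hΦ_ge q hle y 0
      have e : q 0 - qF A 0 - 2 * bF B 0 y = 0 := by
        rw [hq00, bF_zero_left, hqFA0]; ring
      linarith
    have hlem : ∀ y, Φ q y ≤ qF M₀ y := hΦ_le_m₀ q hle
    have hdir1 : ∀ y₁ y₂, Φ q (y₁ + y₂) + Φ q (y₁ - y₂) ≤ 2 * Φ q y₁ + 2 * Φ q y₂ := by
      intro y₁ y₂
      have h1 : Φ q (y₁ + y₂) ≤ 2 * Φ q y₁ + 2 * Φ q y₂ - Φ q (y₁ - y₂) := by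
        apply ciSup_le
        intro x
        have h2 : Φ q (y₁ - y₂)
            ≤ 2 * Φ q y₁ + 2 * Φ q y₂ - (q x - qF A x - 2 * bF B x (y₁ + y₂)) := by
          apply ciSup_le
          intro x'
          have hcq := par_half q hqpar x x'
          have hca := par_half (qF A) (qF_par A) x x'
          have hcb := bF_combine B x x' y₁ y₂
          have g1 := hΦ_ge q hle y₁ ((2⁻¹ : ℂ) • (x + x'))
          have g2 := hΦ_ge q hle y₂ ((2⁻¹ : ℂ) • (x - x'))
          linarith
        linarith
      linarith
    have hzeroΦ : Φ q 0 = 0 := by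
      apply le_antisymm
      · apply ciSup_le
        intro x
        have h1 := hle x
        have h2 := hm₀A x
        have h3 := bF_zero_right B x
        linarith
      · exact hpos 0
    have hhomle : ∀ (c : ℂ), c ≠ 0 → ∀ y, Φ q (c • y) ≤ ‖c‖ ^ 2 * Φ q y := by
      intro c hc y
      apply ciSup_le
      intro x
      have hx : x = c • (c⁻¹ • x) := by
        rw [smul_smul, mul_inv_cancel₀ hc, one_smul]
      have key := mul_le_mul_of_nonneg_left (hΦ_ge q hle y (c⁻¹ • x))
        (by positivity : (0 : ℝ) ≤ ‖c‖ ^ 2)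
      rw [hx, hqhom, qF_hom, bF_smul_both]
      nlinarith [key]
    have hhomΦ : ∀ (c : ℂ) (y : E), Φ q (c • y) = ‖c‖ ^ 2 * Φ q y := by
      intro c y
      rcases eq_or_ne c 0 with rfl | hc
      · rw [zero_smul, hzeroΦ]
        simp
      · refine le_antisymm (hhomle c hc y) ?_
        have h2 := hhomle c⁻¹ (inv_ne_zero hc) (c • y)
        rw [smul_smul, inv_mul_cancel₀ hc, one_smul, norm_inv] at h2
        have hc0 : (0 : ℝ) < ‖c‖ := norm_pos_iff.mpr hc
        have h3 := mul_le_mul_of_nonneg_left h2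
          (le_of_lt (by positivity : (0 : ℝ) < ‖c‖ ^ 2))
        have hne : ‖c‖ ≠ 0 := ne_of_gt hc0
        have e : ‖c‖ ^ 2 * ((‖c‖⁻¹) ^ 2 * Φ q (c • y)) = Φ q (c • y) := by
          rw [← mul_assoc, inv_pow, mul_inv_cancel₀ (pow_ne_zero 2 hne), one_mul]
        rw [e] at h3
        exact h3
    have hparΦ : ∀ y₁ y₂, Φ q (y₁ + y₂) + Φ q (y₁ - y₂) = 2 * Φ q y₁ + 2 * Φ q y₂ := by
      intro y₁ y₂
      refine le_antisymm (hdir1 y₁ y₂) ?_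
      have h := hdir1 ((2⁻¹ : ℂ) • (y₁ + y₂)) ((2⁻¹ : ℂ) • (y₁ - y₂))
      have e1 : (2⁻¹ : ℂ) • (y₁ + y₂) + (2⁻¹ : ℂ) • (y₁ - y₂) = y₁ := by
        rw [← smul_add, show y₁ + y₂ + (y₁ - y₂) = y₁ + y₁ by abel, ← two_smul ℂ y₁,
          smul_smul]
        norm_num
      have e2 : (2⁻¹ : ℂ) • (y₁ + y₂) - (2⁻¹ : ℂ) • (y₁ - y₂) = y₂ := by
        rw [← smul_sub, show y₁ + y₂ - (y₁ - y₂) = y₂ + y₂ by abel, ← two_smul ℂ y₂,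
          smul_smul]
        norm_num
      rw [e1, e2] at h
      have h3 := hhomΦ (2⁻¹ : ℂ) (y₁ + y₂)
      have h4 := hhomΦ (2⁻¹ : ℂ) (y₁ - y₂)
      have hn : ‖(2⁻¹ : ℂ)‖ ^ 2 = (4⁻¹ : ℝ) := by
        rw [norm_inv]
        norm_num
      rw [h3, h4, hn] at h
      linarith
    have hSΦ : ∀ y, Φ q (S y) = Φ q y := by
      intro y
      apply le_antisymm
      · apply ciSup_le
        intro x
        obtain ⟨x', rfl⟩ := hSsurj x
        rw [hqS x', haS x', hbS x' y]
        exact hΦ_ge q hle y x'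
      · apply ciSup_le
        intro x
        have e : q x - qF A x - 2 * bF B x y
            = q (S x) - qF A (S x) - 2 * bF B (S x) (S y) := by
          rw [hqS x, haS x, hbS x y]
        rw [e]
        exact hΦ_ge q hle (S y) (S x)
    exact ⟨hpos, hlem, hparΦ, hhomΦ, hSΦ⟩
  -- all iterates are good
  have hQgood : ∀ k, (∀ x, 0 ≤ Q k x) ∧ (∀ x, Q k x ≤ qF M₀ x) ∧
      (∀ x y, Q k (x + y) + Q k (x - y) = 2 * Q k x + 2 * Q k y) ∧
      (∀ (c : ℂ) (x : E), Q k (c • x) = ‖c‖ ^ 2 * Q k x) ∧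
      (∀ x, Q k (S x) = Q k x) := by
    intro k
    induction k with
    | zero =>
      refine ⟨fun x => le_of_eq (hQzero x).symm, fun x => ?_, fun x y => ?_, fun c x => ?_,
        fun x => ?_⟩
      · rw [hQzero x]; exact hm₀0 x
      · rw [hQzero _, hQzero _, hQzero _, hQzero _]; ring
      · rw [hQzero _, hQzero _]; ring
      · rw [hQzero _, hQzero _]
    | succ k ih =>
      rw [hQsucc k]
      exact hgood_step (Q k) ih
  have hQmono : ∀ k x, Q k x ≤ Q (k + 1) x := by
    intro k
    induction k with
    | zero =>
      intro x
      rw [hQzero x]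
      exact (hQgood 1).1 x
    | succ k ih =>
      intro y
      rw [hQsucc k, hQsucc (k + 1)]
      exact hΦ_mono (Q k) (Q (k + 1)) ih ((hQgood (k + 1)).2.1) y
  -- the limit form
  set qi : E → ℝ := fun x => ⨆ k, Q k x with hqidef
  have hbddk : ∀ x, BddAbove (Set.range fun k => Q k x) := by
    intro x
    refine ⟨qF M₀ x, ?_⟩
    rintro _ ⟨k, rfl⟩
    exact (hQgood k).2.1 x
  have hqi_ge : ∀ k x, Q k x ≤ qi x := fun k x => le_ciSup (hbddk x) k
  have hqi_le : ∀ x, qi x ≤ qF M₀ x := fun x => ciSup_le fun k => (hQgood k).2.1 x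
  have hqi0 : ∀ x, 0 ≤ qi x := fun x => le_trans (le_of_eq (hQzero x).symm) (hqi_ge 0 x)
  have htend : ∀ x, Filter.Tendsto (fun k => Q k x) Filter.atTop (nhds (qi x)) := fun x =>
    tendsto_atTop_ciSup (monotone_nat_of_le_succ fun k => hQmono k x) (hbddk x)
  have hqi_par : ∀ x y, qi (x + y) + qi (x - y) = 2 * qi x + 2 * qi y := by
    intro x y
    have t1 := (htend (x + y)).add (htend (x - y))
    have t2 := ((htend x).const_mul (2 : ℝ)).add ((htend y).const_mul (2 : ℝ))
    have hc : (fun k => Q k (x + y) + Q k (x - y)) = fun k => 2 * Q k x + 2 * Q k y :=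
      funext fun k => (hQgood k).2.2.1 x y
    rw [hc] at t1
    exact tendsto_nhds_unique t1 t2
  have hqi_hom : ∀ (c : ℂ) (x : E), qi (c • x) = ‖c‖ ^ 2 * qi x := by
    intro c x
    have t1 := htend (c • x)
    have t2 := (htend x).const_mul (‖c‖ ^ 2)
    have hc : (fun k => Q k (c • x)) = fun k => ‖c‖ ^ 2 * Q k x :=
      funext fun k => (hQgood k).2.2.2.1 c x
    rw [hc] at t1
    exact tendsto_nhds_unique t1 t2
  have hqi_S : ∀ x, qi (S x) = qi x := fun x => iSup_congr fun k => (hQgood k).2.2.2.2 x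
  have hfix : ∀ x y, qi x - qF A x - 2 * bF B x y ≤ qi y := by
    intro x y
    have h1 : ∀ k, Q k x - qF A x - 2 * bF B x y ≤ qi y := by
      intro k
      have h2 := hΦ_ge (Q k) ((hQgood k).2.1) y x
      rw [← hQsucc k] at h2
      exact h2.trans (hqi_ge (k + 1) y)
    have h2 : qi x ≤ qF A x + 2 * bF B x y + qi y := by
      apply ciSup_le
      intro k
      have := h1 k
      linarith
    linarith
  have hmin : ∀ M, BlockPos A B M → ∀ x, qi x ≤ (inner ℂ (M x) x : ℂ).re := by
    intro M hM
    have hk : ∀ k x, Q k x ≤ (inner ℂ (M x) x : ℂ).re := by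
      intro k
      induction k with
      | zero =>
        intro x
        rw [hQzero x]
        exact blockPos_M_nonneg hM x
      | succ k ih =>
        intro y
        rw [hQsucc k]
        apply ciSup_le
        intro x
        have h1 := blockPos_re hM x y
        have h2 := ih x
        simp only [qF, bF] at *
        linarith
    intro x
    exact ciSup_le fun k => hk k x
  have hqb : ∀ x, |qi x| ≤ ‖M₀‖ * ‖x‖ ^ 2 := by
    intro x
    rw [abs_of_nonneg (hqi0 x)]
    refine (hqi_le x).trans ?_
    have h1 : (inner ℂ (M₀ x) x : ℂ).re ≤ ‖(inner ℂ (M₀ x) x : ℂ)‖ := by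
      exact Complex.re_le_norm _
    have h2 : ‖(inner ℂ (M₀ x) x : ℂ)‖ ≤ ‖M₀ x‖ * ‖x‖ := norm_inner_le_norm _ _
    have h3 : ‖M₀ x‖ ≤ ‖M₀‖ * ‖x‖ := le_opNorm _ _
    have h4 : qF M₀ x = (inner ℂ (M₀ x) x : ℂ).re := rfl
    rw [h4]
    nlinarith [norm_nonneg x, norm_nonneg (M₀ x)]
  obtain ⟨T, hTsa, hTq⟩ := exists_selfadjoint_of_quadratic qi ‖M₀‖ hqb hqi_par hqi_hom
  refine ⟨T, ?_, ?_, ?_⟩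
  · -- BlockPos A B T
    intro x y
    have hAx : (inner ℂ (A x) x : ℂ) = ((qF A x : ℝ) : ℂ) := sa_inner_real hAsa x
    have e : (inner ℂ ((A - T) x) x : ℂ) + ((2 * (inner ℂ (B x) y : ℂ).re : ℝ) : ℂ)
          + (inner ℂ (T y) y : ℂ)
        = (((qF A x - qi x + 2 * bF B x y + qi y : ℝ)) : ℂ) := by
      rw [ContinuousLinearMap.sub_apply, inner_sub_left, hAx, hTq x, hTq y]
      simp only [bF]
      push_cast
      ring
    rw [e, Complex.zero_le_real]
    have := hfix x y
    linarith
  · -- Toeplitz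
    have hz : ∀ x : E, (inner ℂ ((adjoint S ∘L T ∘L S - T) x) x : ℂ) = 0 := by
      intro x
      rw [ContinuousLinearMap.sub_apply, inner_sub_left,
        show (adjoint S ∘L T ∘L S) x = adjoint S (T (S x)) from rfl, adjoint_inner_left,
        hTq (S x), hTq x, hqi_S x, sub_self]
    have h0 : ((adjoint S ∘L T ∘L S - T : E →L[ℂ] E) : E →ₗ[ℂ] E) = 0 :=
      (inner_map_self_eq_zero _).mp hz
    have h1 : (adjoint S ∘L T ∘L S - T : E →L[ℂ] E) = 0 := by
      apply ContinuousLinearMap.coe_injective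
      rw [h0]; rfl
    exact sub_eq_zero.mp h1
  · -- minimality
    intro M hM x
    have h1 := hmin M hM x
    have h2 : (inner ℂ (T x) x : ℂ).re = qi x := by rw [hTq x]; simp
    rw [h2]
    exact h1


open scoped ENNReal

theorem mset_toeplitz_closed (S A B : E →L[ℂ] E) :
    IsClosed {M : E →L[ℂ] E | M ∈ MSet A B ∧ adjoint S ∘L M ∘L S = M} := by
  have hset : {M : E →L[ℂ] E | M ∈ MSet A B ∧ adjoint S ∘L M ∘L S = M}
      = (⋂ x : E, ⋂ y : E, {M : E →L[ℂ] E |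
          0 ≤ (inner ℂ ((A - M) x) x : ℂ) + ((2 * (inner ℂ (B x) y : ℂ).re : ℝ) : ℂ)
            + (inner ℂ (M y) y : ℂ)})
        ∩ {M : E →L[ℂ] E | adjoint S ∘L M ∘L S = M} := by
    ext M
    simp only [Set.mem_setOf_eq, Set.mem_inter_iff, Set.mem_iInter]
    exact Iff.rfl
  rw [hset]
  refine IsClosed.inter (isClosed_iInter fun x => isClosed_iInter fun y => ?_) ?_
  · have hcont : Continuous fun M : E →L[ℂ] E =>
        (inner ℂ ((A - M) x) x : ℂ) + ((2 * (inner ℂ (B x) y : ℂ).re : ℝ) : ℂ)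
          + (inner ℂ (M y) y : ℂ) := by
      have e : (fun M : E →L[ℂ] E =>
          (inner ℂ ((A - M) x) x : ℂ) + ((2 * (inner ℂ (B x) y : ℂ).re : ℝ) : ℂ)
            + (inner ℂ (M y) y : ℂ))
          = fun M => (inner ℂ (A x - M x) x : ℂ) + ((2 * (inner ℂ (B x) y : ℂ).re : ℝ) : ℂ)
            + (inner ℂ (M y) y : ℂ) := rfl
      rw [e]
      apply Continuous.add
      apply Continuous.add
      · exact Continuous.inner
          (continuous_const.sub (ContinuousLinearMap.apply ℂ E x).continuous)
          continuous_const
      · exact continuous_const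
      · exact Continuous.inner (ContinuousLinearMap.apply ℂ E y).continuous continuous_const
    have hpre : {M : E →L[ℂ] E |
        0 ≤ (inner ℂ ((A - M) x) x : ℂ) + ((2 * (inner ℂ (B x) y : ℂ).re : ℝ) : ℂ)
          + (inner ℂ (M y) y : ℂ)}
        = (fun M : E →L[ℂ] E =>
            (inner ℂ ((A - M) x) x : ℂ) + ((2 * (inner ℂ (B x) y : ℂ).re : ℝ) : ℂ)
              + (inner ℂ (M y) y : ℂ)) ⁻¹' (Set.Ici 0) := rfl
    rw [hpre]
    exact IsClosed.preimage hcont isClosed_Ici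
  · have hcont2 : Continuous fun M : E →L[ℂ] E => adjoint S ∘L M ∘L S := by
      have e : (fun M : E →L[ℂ] E => adjoint S ∘L M ∘L S)
          = fun M => (ContinuousLinearMap.compL ℂ E E E (adjoint S))
              (((ContinuousLinearMap.compL ℂ E E E).flip S) M) := rfl
      rw [e]
      exact (ContinuousLinearMap.compL ℂ E E E (adjoint S)).continuous.comp
        ((ContinuousLinearMap.compL ℂ E E E).flip S).continuous
    exact isClosed_eq hcont2 continuous_id

theorem mset_toeplitz_convex (S A B : E →L[ℂ] E) :
    Convex ℝ {M : E →L[ℂ] E | M ∈ MSet A B ∧ adjoint S ∘L M ∘L S = M} := by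
  intro M₁ h₁ M₂ h₂ t s ht hs hts
  have hts' : (t : ℂ) + (s : ℂ) = 1 := by
    exact_mod_cast congrArg (fun r : ℝ => (r : ℂ)) hts
  constructor
  · intro x y
    have hz1 := h₁.1 x y
    have hz2 := h₂.1 x y
    have e : (inner ℂ ((A - (t • M₁ + s • M₂)) x) x : ℂ)
          + ((2 * (inner ℂ (B x) y : ℂ).re : ℝ) : ℂ) + (inner ℂ ((t • M₁ + s • M₂) y) y : ℂ)
        = (t : ℂ) * ((inner ℂ ((A - M₁) x) x : ℂ) + ((2 * (inner ℂ (B x) y : ℂ).re : ℝ) : ℂ)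
            + (inner ℂ (M₁ y) y : ℂ))
          + (s : ℂ) * ((inner ℂ ((A - M₂) x) x : ℂ) + ((2 * (inner ℂ (B x) y : ℂ).re : ℝ) : ℂ)
            + (inner ℂ (M₂ y) y : ℂ)) := by
      simp only [ContinuousLinearMap.sub_apply, ContinuousLinearMap.add_apply,
        ContinuousLinearMap.coe_smul', Pi.smul_apply, inner_sub_left, inner_add_left]
      simp only [← Complex.coe_smul]
      simp only [inner_smul_left, Complex.conj_ofReal, Complex.ofReal_mul,
        Complex.ofReal_ofNat]
      linear_combination (-(inner ℂ (A x) x : ℂ)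
        - 2 * (((inner ℂ (B x) y : ℂ).re : ℝ) : ℂ)) * hts'
    show (0 : ℂ) ≤ _
    rw [e]
    exact add_nonneg (mul_nonneg (Complex.zero_le_real.mpr ht) hz1)
      (mul_nonneg (Complex.zero_le_real.mpr hs) hz2)
  · show adjoint S ∘L (t • M₁ + s • M₂) ∘L S = t • M₁ + s • M₂
    rw [ContinuousLinearMap.add_comp, ContinuousLinearMap.smul_comp,
      ContinuousLinearMap.smul_comp, ContinuousLinearMap.comp_add,
      ContinuousLinearMap.comp_smul, ContinuousLinearMap.comp_smul, h₁.2, h₂.2]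


theorem blockPos_star {A B M : E →L[ℂ] E} (hAsa : IsSelfAdjoint A) (hM : BlockPos A B M) :
    BlockPos A (adjoint B) (A - M) := by
  intro x y
  have hMsa := blockPos_selfAdjoint hM
  have e1 : A - (A - M) = M := sub_sub_cancel A M
  have e2 : (inner ℂ ((adjoint B) x) y : ℂ).re = (inner ℂ (B y) x : ℂ).re := by
    rw [adjoint_inner_left, ← inner_conj_symm (B y) x, Complex.conj_re]
  have hAx : (inner ℂ (A y) y : ℂ) = ((inner ℂ (A y) y : ℂ).re : ℂ) := sa_inner_real hAsa y
  have hMx : (inner ℂ (M x) x : ℂ) = ((inner ℂ (M x) x : ℂ).re : ℂ) := sa_inner_real hMsa x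
  have hMy : (inner ℂ (M y) y : ℂ) = ((inner ℂ (M y) y : ℂ).re : ℂ) := sa_inner_real hMsa y
  have e : (inner ℂ ((A - (A - M)) x) x : ℂ) + ((2 * (inner ℂ ((adjoint B) x) y : ℂ).re : ℝ) : ℂ)
        + (inner ℂ ((A - M) y) y : ℂ)
      = ((((inner ℂ (A y) y : ℂ).re - (inner ℂ (M y) y : ℂ).re) + 2 * (inner ℂ (B y) x : ℂ).re
          + (inner ℂ (M x) x : ℂ).re : ℝ) : ℂ) := by
    rw [e1, e2, ContinuousLinearMap.sub_apply, inner_sub_left, hAx, hMx, hMy]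
    push_cast
    simp only [Complex.ofReal_re]
    ring
  rw [e, Complex.zero_le_real]
  have := blockPos_re hM y x
  linarith

/-- **Doubly infinite Toeplitz structure of the extreme elements of `𝓜(A,B)`.**
Let `K` be a complex Hilbert space, `S̃` the bilateral shift on `ℓ²(ℤ,K)`, and `A, B`
bounded doubly infinite Toeplitz operators (`S̃*AS̃ = A`, `S̃*BS̃ = B`) with `A` selfadjoint
such that `𝓜(A,B)` is nonempty.  Then `𝓜(A,B)` has a greatest element `M₊` and a least
element `M₋`, both doubly infinite Toeplitz, and the subset `𝓜_T(A,B)` of doubly infinite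
Toeplitz elements of `𝓜(A,B)` is norm closed and convex and contains `M₊` and `M₋` as its
greatest and least elements. -/
theorem doubly_infinite_toeplitz_MSet
    {K : Type*} [NormedAddCommGroup K] [InnerProductSpace ℂ K] [CompleteSpace K]
    (S : lp (fun _ : ℤ => K) 2 →L[ℂ] lp (fun _ : ℤ => K) 2)
    (hS : ∀ (f : lp (fun _ : ℤ => K) 2) (n : ℤ), (S f) n = f (n - 1))
    (A B : lp (fun _ : ℤ => K) 2 →L[ℂ] lp (fun _ : ℤ => K) 2)
    (hA : adjoint S ∘L A ∘L S = A) (hB : adjoint S ∘L B ∘L S = B)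
    (hAsa : IsSelfAdjoint A) (hne : (MSet A B).Nonempty) :
    ∃ Mp Mm : lp (fun _ : ℤ => K) 2 →L[ℂ] lp (fun _ : ℤ => K) 2,
      Mp ∈ MSet A B ∧ Mm ∈ MSet A B ∧
      adjoint S ∘L Mp ∘L S = Mp ∧ adjoint S ∘L Mm ∘L S = Mm ∧
      (∀ M ∈ MSet A B, (Mp - M).IsPositive) ∧
      (∀ M ∈ MSet A B, (M - Mm).IsPositive) ∧
      IsClosed {M | M ∈ MSet A B ∧ adjoint S ∘L M ∘L S = M} ∧
      Convex ℝ {M | M ∈ MSet A B ∧ adjoint S ∘L M ∘L S = M} := by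
  obtain ⟨M₀, hM₀⟩ := hne
  have hM₀' : BlockPos A B M₀ := hM₀
  -- surjectivity of the shift
  have hSsurj : Function.Surjective S := by
    intro g
    have hg := lp.memℓp g
    have h1 : Summable fun n : ℤ => ‖g n‖ ^ (2 : ℝ≥0∞).toReal := hg.summable (by norm_num)
    have hsum : Summable fun n : ℤ => ‖g (n + 1)‖ ^ (2 : ℝ≥0∞).toReal :=
      ((Equiv.addRight (1 : ℤ)).summable_iff).mpr h1
    have hmem : Memℓp (fun n : ℤ => g (n + 1)) 2 := memℓp_gen hsum
    refine ⟨⟨fun n => g (n + 1), hmem⟩, ?_⟩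
    apply lp.ext
    funext n
    rw [hS]
    have e : (⟨fun n => g (n + 1), hmem⟩ : lp (fun _ : ℤ => K) 2) (n - 1) = g (n - 1 + 1) := rfl
    rw [e, sub_add_cancel]
  -- adjoint B is Toeplitz
  have hBstar : adjoint S ∘L adjoint B ∘L S = adjoint B := by
    have h1 := congrArg adjoint hB
    rw [adjoint_comp, adjoint_comp, adjoint_adjoint] at h1
    rw [← ContinuousLinearMap.comp_assoc]
    exact h1
  -- the least element of 𝓜(A,B)
  obtain ⟨Mm, hMm, hMmT, hMmmin⟩ := exists_least_blockPos S A B hSsurj hA hB hAsa M₀ hM₀'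
  -- the least element of 𝓜(A,B*)
  have hM₀star : BlockPos A (adjoint B) (A - M₀) := blockPos_star hAsa hM₀'
  obtain ⟨L, hL, hLT, hLmin⟩ :=
    exists_least_blockPos S A (adjoint B) hSsurj hA hBstar hAsa (A - M₀) hM₀star
  have hMpmem : BlockPos A B (A - L) := by
    have h2 := blockPos_star hAsa hL
    rwa [adjoint_adjoint] at h2
  have hMpT : adjoint S ∘L (A - L) ∘L S = A - L := by
    rw [ContinuousLinearMap.sub_comp, ContinuousLinearMap.comp_sub, hA, hLT]
  have hLsa := blockPos_selfAdjoint hL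
  have hMmsa := blockPos_selfAdjoint hMm
  -- greatest property
  have hGreat : ∀ M ∈ MSet A B, ((A - L) - M).IsPositive := by
    intro M hM
    have hMstar : BlockPos A (adjoint B) (A - M) := blockPos_star hAsa hM
    have h1 := hLmin (A - M) hMstar
    have hMsa' := blockPos_selfAdjoint hM
    refine ⟨((hAsa.sub hLsa).sub hMsa').isSymmetric, fun x => ?_⟩
    have h2 := h1 x
    simp only [ContinuousLinearMap.sub_apply, inner_sub_left, Complex.sub_re] at h2
    show (0 : ℝ) ≤ RCLike.re (inner ℂ ((A - L - M) x) x : ℂ)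
    simp only [ContinuousLinearMap.sub_apply, inner_sub_left, map_sub, RCLike.re_to_complex,
      Complex.sub_re]
    linarith
  -- least property
  have hLeast : ∀ M ∈ MSet A B, (M - Mm).IsPositive := by
    intro M hM
    have h1 := hMmmin M hM
    refine ⟨((blockPos_selfAdjoint hM).sub hMmsa).isSymmetric, fun x => ?_⟩
    have h2 := h1 x
    show (0 : ℝ) ≤ RCLike.re (inner ℂ ((M - Mm) x) x : ℂ)
    simp only [ContinuousLinearMap.sub_apply, inner_sub_left, map_sub, RCLike.re_to_complex,
      Complex.sub_re]
    linarith
  -- closedness and convexity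
  have hclosed := mset_toeplitz_closed S A B
  have hconvex := mset_toeplitz_convex S A B
  exact ⟨A - L, Mm, hMpmem, hMm, hMpT, hMmT, hGreat, hLeast, hclosed, hconvex⟩
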